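/- For every p₀ ∈ E with 0 < ‖p₀‖ < 1, the limit lim_{δ→0⁺} μ(B(p₀, δ))/(π·δ²) exists and equals τ({X ∈ Y : ∃ ζ ∈ ℂ, p₀ = ζ • v X}), the τ-mass of the set of disk directions whose complex line passes through p₀. In particular, if the 2-density of the cone measure μ at a non-vertex point p₀ is at least κ > 0, then τ({X : ∃ ζ ∈ ℂ, p₀ = ζ • v X}) ≥ κ. (The key step concluding the proof of Proposition 3.1: a point of density ≥ κ on a positive (1,1)-cone forces the weighting measure τ to carry mass ≥ κ on the disk through that point.) -/

import Mathlib

open Metric MeasureTheory Filter Real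

noncomputable instance (n : ℕ) : MeasurableSpace (EuclideanSpace ℂ (Fin n)) :=
  WithLp.measurableSpace 2 (Fin n → ℂ)

instance (n : ℕ) : BorelSpace (EuclideanSpace ℂ (Fin n)) :=
  PiLp.borelSpace 2

/-- The measure-theoretic model of a positive (1,1)-cone (formula (2) of the
paper): the family of `J₀`-holomorphic unit disks through `0` with directions
`v X`, weighted by the positive measure `τ`; concretely, the pushforward of
`τ ⊗ (Lebesgue on the unit disk of ℂ)` under `(X, ζ) ↦ ζ • v X`. -/
noncomputable def coneMeasure {n : ℕ} {Y : Type*} [MeasurableSpace Y]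
    (τ : Measure Y) (v : Y → EuclideanSpace ℂ (Fin (n + 1))) :
    Measure (EuclideanSpace ℂ (Fin (n + 1))) :=
  Measure.map (fun p : Y × ℂ => p.2 • v p.1)
    (τ.prod ((volume : Measure ℂ).restrict (ball 0 1)))

/-! Since `‖v X‖ = 1`, Pythagoras splits `‖ζ • v X - p‖²` as `‖ζ - ⟪v X, p⟫‖² + d²`, where `d`
is the distance from `p` to the line `ℂ • v X`. So the disk of direction `v X` meets `B(p, δ)` in
a set of area at most `π δ²`; in nothing once `δ ≤ d`; and, when `p` lies on the line, in a full
disk of radius `δ` as soon as `‖p‖ + δ ≤ 1`. The normalised slice areas therefore converge to the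
indicator of `{X | ∃ ζ, p = ζ • v X}`, and dominated convergence for the finite measure `τ` gives
the limit. -/

section Line

variable {𝕜 E : Type*} [RCLike 𝕜] [NormedAddCommGroup E] [InnerProductSpace 𝕜 E] {u : E}

theorem norm_smul_sub_sq (hu : ‖u‖ = 1) (ζ : 𝕜) (p : E) :
    ‖ζ • u - p‖ ^ 2 = ‖ζ - inner 𝕜 u p‖ ^ 2 + ‖p - inner 𝕜 u p • u‖ ^ 2 := by
  have horth : inner 𝕜 ((ζ - inner 𝕜 u p) • u) (inner 𝕜 u p • u - p) = 0 := by
    rw [inner_smul_left, inner_sub_right, inner_smul_right, inner_self_eq_one_of_norm_eq_one hu]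
    ring
  have hsplit : ζ • u - p = (ζ - inner 𝕜 u p) • u + (inner 𝕜 u p • u - p) := by module
  rw [hsplit, sq, sq, sq, norm_add_sq_eq_norm_sq_add_norm_sq_of_inner_eq_zero _ _ horth,
    norm_smul, hu, mul_one, norm_sub_rev p]

theorem norm_sub_inner_le_norm_smul_sub (hu : ‖u‖ = 1) (ζ : 𝕜) (p : E) :
    ‖ζ - inner 𝕜 u p‖ ≤ ‖ζ • u - p‖ :=
  sq_le_sq₀ (norm_nonneg _) (norm_nonneg _) |>.1 <| by
    rw [norm_smul_sub_sq hu]; exact le_add_of_nonneg_right (sq_nonneg _)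

theorem norm_sub_inner_smul_le_norm_smul_sub (hu : ‖u‖ = 1) (ζ : 𝕜) (p : E) :
    ‖p - inner 𝕜 u p • u‖ ≤ ‖ζ • u - p‖ :=
  sq_le_sq₀ (norm_nonneg _) (norm_nonneg _) |>.1 <| by
    rw [norm_smul_sub_sq hu]; exact le_add_of_nonneg_left (sq_nonneg _)

theorem exists_smul_eq_iff_eq_inner_smul (hu : ‖u‖ = 1) (p : E) :
    (∃ ζ : 𝕜, p = ζ • u) ↔ p = inner 𝕜 u p • u := by
  refine ⟨?_, fun h => ⟨_, h⟩⟩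
  rintro ⟨ζ, rfl⟩
  rw [inner_smul_right, inner_self_eq_one_of_norm_eq_one hu, mul_one]

theorem preimage_smul_ball_subset (hu : ‖u‖ = 1) (p : E) (δ : ℝ) :
    (fun ζ : 𝕜 => ζ • u) ⁻¹' ball p δ ⊆ ball (inner 𝕜 u p) δ := fun ζ hζ =>
  mem_ball_iff_norm.2 <| (norm_sub_inner_le_norm_smul_sub hu ζ p).trans_lt (mem_ball_iff_norm.1 hζ)

theorem preimage_smul_ball_eq_empty (hu : ‖u‖ = 1) {p : E} {δ : ℝ}
    (hδ : δ ≤ ‖p - inner 𝕜 u p • u‖) : (fun ζ : 𝕜 => ζ • u) ⁻¹' ball p δ = ∅ :=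
  Set.eq_empty_of_forall_notMem fun ζ hζ =>
    (hδ.trans (norm_sub_inner_smul_le_norm_smul_sub hu ζ p)).not_gt (mem_ball_iff_norm.1 hζ)

theorem preimage_smul_ball_smul (hu : ‖u‖ = 1) (c : 𝕜) (δ : ℝ) :
    (fun ζ : 𝕜 => ζ • u) ⁻¹' ball (c • u) δ = ball c δ := by
  ext ζ
  simp only [Set.mem_preimage, mem_ball_iff_norm, ← sub_smul, norm_smul, hu, mul_one]

end Line

theorem Complex.volume_real_ball (c : ℂ) {δ : ℝ} (hδ : 0 ≤ δ) :
    volume.real (ball c δ) = π * δ ^ 2 := by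
  simp [measureReal_def, ENNReal.toReal_ofReal hδ, mul_comm]

section DiskDensity

variable {E : Type*} [NormedAddCommGroup E] [InnerProductSpace ℂ E] {u : E}

noncomputable def unitDiskDensityRatio (u p : E) (δ : ℝ) : ℝ :=
  (volume.restrict (ball (0 : ℂ) 1)).real ((fun ζ : ℂ => ζ • u) ⁻¹' ball p δ) / (π * δ ^ 2)

theorem unitDiskDensityRatio_nonneg (u p : E) (δ : ℝ) : 0 ≤ unitDiskDensityRatio u p δ :=
  div_nonneg measureReal_nonneg (by positivity)

theorem unitDiskDensityRatio_le_one (hu : ‖u‖ = 1) (p : E) {δ : ℝ} (hδ : 0 < δ) :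
    unitDiskDensityRatio u p δ ≤ 1 := by
  rw [unitDiskDensityRatio, div_le_one (by positivity),
    ← Complex.volume_real_ball (inner ℂ u p) hδ.le]
  exact ENNReal.toReal_mono measure_ball_lt_top.ne
    ((measure_mono (preimage_smul_ball_subset hu p δ)).trans (Measure.restrict_le_self _))

theorem unitDiskDensityRatio_smul_eq_one (hu : ‖u‖ = 1) {c : ℂ} {δ : ℝ} (hδ : 0 < δ)
    (hc : ‖c‖ + δ ≤ 1) : unitDiskDensityRatio u (c • u) δ = 1 := by
  have hball : ball c δ ⊆ ball 0 1 := ball_subset_ball' (by simpa [add_comm] using hc)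
  rw [unitDiskDensityRatio, preimage_smul_ball_smul hu,
    measureReal_restrict_apply measurableSet_ball, Set.inter_eq_left.2 hball,
    Complex.volume_real_ball _ hδ.le, div_self (by positivity)]

theorem unitDiskDensityRatio_eq_zero (hu : ‖u‖ = 1) {p : E} {δ : ℝ}
    (hδ : δ ≤ ‖p - inner ℂ u p • u‖) : unitDiskDensityRatio u p δ = 0 := by
  rw [unitDiskDensityRatio, preimage_smul_ball_eq_empty hu hδ, measureReal_empty, zero_div]

open Classical in
theorem tendsto_unitDiskDensityRatio (hu : ‖u‖ = 1) {p : E} (hp : ‖p‖ < 1) :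
    Tendsto (unitDiskDensityRatio u p) (nhdsWithin 0 (Set.Ioi 0))
      (nhds (if ∃ ζ : ℂ, p = ζ • u then 1 else 0)) := by
  split_ifs with hline
  · obtain ⟨c, rfl⟩ := hline
    have hc : ‖c‖ < 1 := by rwa [norm_smul, hu, mul_one] at hp
    refine tendsto_const_nhds.congr' ?_
    filter_upwards [Ioo_mem_nhdsGT (sub_pos.2 hc)] with δ hδ
    exact (unitDiskDensityRatio_smul_eq_one hu hδ.1 (by linarith [hδ.2])).symm
  · have hdist : 0 < ‖p - inner ℂ u p • u‖ :=
      norm_pos_iff.2 (sub_ne_zero.2 fun h => hline ((exists_smul_eq_iff_eq_inner_smul hu p).2 h))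
    refine tendsto_const_nhds.congr' ?_
    filter_upwards [Ioo_mem_nhdsGT hdist] with δ hδ
    exact (unitDiskDensityRatio_eq_zero hu hδ.2.le).symm

end DiskDensity

section ConeMeasure

variable {n : ℕ} {Y : Type*} [MeasurableSpace Y] {τ : Measure Y}
  {v : Y → EuclideanSpace ℂ (Fin (n + 1))}

theorem measurable_snd_smul_comp_fst (hv : Measurable v) :
    Measurable fun q : Y × ℂ => q.2 • v q.1 :=
  measurable_snd.smul (hv.comp measurable_fst)

theorem measurable_restrict_unitDisk_preimage_smul (hv : Measurable v)
    {s : Set (EuclideanSpace ℂ (Fin (n + 1)))} (hs : MeasurableSet s) :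
    Measurable fun X => volume.restrict (ball (0 : ℂ) 1) ((fun ζ : ℂ => ζ • v X) ⁻¹' s) :=
  measurable_measure_prodMk_left (measurable_snd_smul_comp_fst hv hs)

theorem coneMeasure_apply (hv : Measurable v) {s : Set (EuclideanSpace ℂ (Fin (n + 1)))}
    (hs : MeasurableSet s) :
    coneMeasure τ v s = ∫⁻ X, volume.restrict (ball 0 1) ((fun ζ : ℂ => ζ • v X) ⁻¹' s) ∂τ := by
  rw [coneMeasure, Measure.map_apply (measurable_snd_smul_comp_fst hv) hs,
    Measure.prod_apply (measurable_snd_smul_comp_fst hv hs)]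
  rfl

theorem coneMeasure_ball_div_eq_integral (hv : Measurable v) (p : EuclideanSpace ℂ (Fin (n + 1)))
    (δ : ℝ) : (coneMeasure τ v (ball p δ)).toReal / (π * δ ^ 2) =
      ∫ X, unitDiskDensityRatio (v X) p δ ∂τ := by
  have : IsFiniteMeasure (volume.restrict (ball (0 : ℂ) 1)) :=
    isFiniteMeasure_restrict.2 measure_ball_lt_top.ne
  simp only [unitDiskDensityRatio, measureReal_def]
  rw [integral_div, integral_toReal
    (measurable_restrict_unitDisk_preimage_smul hv measurableSet_ball).aemeasurable
    (Eventually.of_forall fun _ => measure_lt_top _ _), coneMeasure_apply hv measurableSet_ball]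

theorem measurableSet_exists_smul_eq (hv : Measurable v) (hv1 : ∀ X, ‖v X‖ = 1)
    (p : EuclideanSpace ℂ (Fin (n + 1))) : MeasurableSet {X | ∃ ζ : ℂ, p = ζ • v X} := by
  simp only [exists_smul_eq_iff_eq_inner_smul (hv1 _)]
  exact measurableSet_eq_fun measurable_const (by fun_prop)

theorem tendsto_coneMeasure_ball_div [IsFiniteMeasure τ] (hv : Measurable v) (hv1 : ∀ X, ‖v X‖ = 1)
    {p : EuclideanSpace ℂ (Fin (n + 1))} (hp : ‖p‖ < 1) :
    Tendsto (fun δ : ℝ => (coneMeasure τ v (ball p δ)).toReal / (π * δ ^ 2))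
      (nhdsWithin 0 (Set.Ioi 0)) (nhds (τ {X | ∃ ζ : ℂ, p = ζ • v X}).toReal) := by
  classical
  simp only [coneMeasure_ball_div_eq_integral hv]
  have hS := measurableSet_exists_smul_eq hv hv1 p
  rw [← measureReal_def, ← mul_one (τ.real _), ← smul_eq_mul, ← integral_indicator_const _ hS]
  refine tendsto_integral_filter_of_dominated_convergence (fun _ => 1)
    (Eventually.of_forall fun δ => ?_) ?_ (integrable_const 1) (ae_of_all _ fun X => ?_)
  · exact ((measurable_restrict_unitDisk_preimage_smul hv measurableSet_ball).ennreal_toReal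
      |>.div_const _).aestronglyMeasurable
  · filter_upwards [self_mem_nhdsWithin] with δ hδ
    refine ae_of_all _ fun X => ?_
    rw [Real.norm_of_nonneg (unitDiskDensityRatio_nonneg _ _ _)]
    exact unitDiskDensityRatio_le_one (hv1 X) p hδ
  · simpa [Set.indicator_apply] using tendsto_unitDiskDensityRatio (hv1 X) hp

end ConeMeasure

theorem coneMeasure_density_at_nonvertex_general
    (n : ℕ) (Y : Type*) [MeasurableSpace Y]
    (τ : Measure Y) [IsFiniteMeasure τ]
    (v : Y → EuclideanSpace ℂ (Fin (n + 1))) (hv : Measurable v)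
    (hv1 : ∀ X, ‖v X‖ = 1)
    (p₀ : EuclideanSpace ℂ (Fin (n + 1))) (hp₁ : ‖p₀‖ < 1) :
    Tendsto (fun δ : ℝ => (coneMeasure τ v (ball p₀ δ)).toReal / (π * δ ^ 2))
      (nhdsWithin 0 (Set.Ioi 0))
      (nhds (τ {X | ∃ ζ : ℂ, p₀ = ζ • v X}).toReal) ∧
    ∀ κ : ℝ, 0 < κ →
      κ ≤ liminf (fun δ : ℝ =>
            (coneMeasure τ v (ball p₀ δ)).toReal / (π * δ ^ 2))
          (nhdsWithin 0 (Set.Ioi 0)) →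
      κ ≤ (τ {X | ∃ ζ : ℂ, p₀ = ζ • v X}).toReal := by
  have hlim := tendsto_coneMeasure_ball_div (τ := τ) hv hv1 hp₁
  exact ⟨hlim, fun κ _ hκ => hlim.liminf_eq ▸ hκ⟩

/-- **Density of a positive (1,1)-cone at a non-vertex point (key step in the
proof of Proposition 3.1).**  At every `p₀` with `0 < ‖p₀‖ < 1`, the 2-density
`lim_{δ→0⁺} μ(B(p₀,δ))/(π δ²)` of the cone measure exists and equals the
`τ`-mass of the set of disk directions whose complex line passes through `p₀`.
In particular, if the density at `p₀` is at least `κ > 0`, then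
`τ({X : ∃ ζ, p₀ = ζ • v X}) ≥ κ`. -/
theorem coneMeasure_density_at_nonvertex
    (n : ℕ) (Y : Type*) [MeasurableSpace Y]
    (τ : Measure Y) [IsFiniteMeasure τ]
    (v : Y → EuclideanSpace ℂ (Fin (n + 1))) (hv : Measurable v)
    (hv1 : ∀ X, ‖v X‖ = 1)
    (p₀ : EuclideanSpace ℂ (Fin (n + 1))) (hp₀ : 0 < ‖p₀‖) (hp₁ : ‖p₀‖ < 1) :
    Tendsto (fun δ : ℝ => (coneMeasure τ v (ball p₀ δ)).toReal / (π * δ ^ 2))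
      (nhdsWithin 0 (Set.Ioi 0))
      (nhds (τ {X | ∃ ζ : ℂ, p₀ = ζ • v X}).toReal) ∧
    ∀ κ : ℝ, 0 < κ →
      κ ≤ liminf (fun δ : ℝ =>
            (coneMeasure τ v (ball p₀ δ)).toReal / (π * δ ^ 2))
          (nhdsWithin 0 (Set.Ioi 0)) →
      κ ≤ (τ {X | ∃ ζ : ℂ, p₀ = ζ • v X}).toReal :=
  coneMeasure_density_at_nonvertex_general n Y τ v hv hv1 p₀ hp₁
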